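/- For every even n ≥ 6, the decycling number of the cube of the n-cycle equals (n+2)/2: ∇(Cₙ³) = (n+2)/2. -/

import Mathlib

open SimpleGraph

/-- `S` is a decycling set of `G` if the subgraph of `G` induced on the complement of `S`
is acyclic. -/
def SimpleGraph.IsDecyclingSet {V : Type*} (G : SimpleGraph V) (S : Set V) : Prop :=
  (G.induce Sᶜ).IsAcyclic

/-- The decycling number `∇(G)` of `G`: the minimum cardinality of a decycling set of `G`. -/
noncomputable def SimpleGraph.decyclingNumber {V : Type*} (G : SimpleGraph V) : ℕ :=
  sInf {k | ∃ S : Set V, G.IsDecyclingSet S ∧ S.ncard = k}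

/-- The cube `Cₙ³` of the `n`-cycle: vertex set `ZMod n`, with `i` adjacent to `j` iff
`i ≠ j` and `i - j ≡ ±1`, `±2`, or `±3 (mod n)`. -/
def cycleCube (n : ℕ) : SimpleGraph (ZMod n) where
  Adj i j := i ≠ j ∧ (i - j = 1 ∨ j - i = 1 ∨ i - j = 2 ∨ j - i = 2 ∨ i - j = 3 ∨ j - i = 3)
  symm := by constructor; intro i j ⟨h, hd⟩; exact ⟨h.symm, by tauto⟩
  loopless := by constructor; intro i ⟨h, _⟩; exact h rfl

/-!
Any four consecutive vertices `i, …, i + 3` of `Cₙ³` span a `K₄`, so the complement `F` of a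
decycling set, which induces a forest, meets each such window in at most two vertices; counting
the `n` windows gives `2 |F| ≤ n`. If equality held, every window would meet `F` in exactly two
vertices, so `F` would be invariant under `i ↦ i + 4`, and each `v ∈ F` would have two distinct
neighbours `v + d` and `v + d - 4` in `F`; but a finite nonempty forest has a vertex of degree at
most one. Hence `2 |F| ≤ n - 2` for even `n`. Conversely the nonzero even residues
`2, 4, …, n - 2` induce a path, so their complement, of size `n / 2 + 1`, is a decycling set.
-/

open Finset

namespace SimpleGraph

variable {V : Type*} {G : SimpleGraph V}

lemma IsAcyclic.exists_neighborSet_subsingleton [Finite V] [Nonempty V] (h : G.IsAcyclic) :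
    ∃ v, (G.neighborSet v).Subsingleton := by
  obtain ⟨u, v, p, hp, hmax⟩ := Walk.exists_isPath_forall_isPath_length_le_length G
  refine ⟨v, fun a ha b hb => ?_⟩
  have mem_support : ∀ w, G.Adj v w → w ∈ p.support := fun w hw => by
    by_contra hw'
    have := hmax _ _ _ (hp.concat hw' hw)
    rw [Walk.length_concat] at this
    omega
  rw [h.eq_penultimate_of_adj_end hp ha (mem_support a ha),
    h.eq_penultimate_of_adj_end hp hb (mem_support b hb)]

lemma IsAcyclic.card_le_two_of_isClique {s : Set V} (h : (G.induce s).IsAcyclic)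
    {t : Finset V} (ht : G.IsClique (t : Set V)) (hts : (t : Set V) ⊆ s) : #t ≤ 2 := by
  classical
  by_contra! h3
  obtain ⟨u, hut, hu⟩ := exists_subset_card_eq h3
  refine h.cliqueFree le_rfl (u.subtype (· ∈ s)) ?_
  rw [isNClique_induce_iff, subtype_map_of_mem fun x hx => hts (hut hx)]
  exact ⟨ht.subset (by simpa using hut), hu⟩

lemma mem_edges_of_covBy_of_walk_hasse {α : Type*} [LinearOrder α] {x y : α} (hxy : x ⋖ y) :
    ∀ {a b : α} (p : (hasse α).Walk a b), a ≤ x → y ≤ b → s(x, y) ∈ p.edges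
  | _, _, .nil, ha, hb => absurd (ha.trans_lt hxy.lt) (not_lt.2 hb)
  | a, _, .cons (v := c) hac p, ha, hb => by
    rw [Walk.edges_cons, List.mem_cons]
    by_cases hc : c ≤ x
    · exact .inr (mem_edges_of_covBy_of_walk_hasse hxy p hc hb)
    push Not at hc
    rcases hac with hac | hca
    · obtain rfl : a = x := by
        by_contra hne
        exact hac.2 (lt_of_le_of_ne ha hne) hc
      exact .inl (by rw [hac.unique_right hxy])
    · exact absurd (hca.lt.trans_le ha) (not_lt.2 hc.le)

theorem isAcyclic_hasse (α : Type*) [LinearOrder α] : (hasse α).IsAcyclic := by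
  refine isAcyclic_iff_forall_adj_isBridge.2 fun u v huv => ?_
  refine isBridge_iff_forall_walk_mem_edges.2 fun p => ?_
  rcases huv with huv | hvu
  · exact mem_edges_of_covBy_of_walk_hasse huv p le_rfl le_rfl
  · simpa [Sym2.eq_swap] using mem_edges_of_covBy_of_walk_hasse hvu p.reverse le_rfl le_rfl

lemma decyclingNumber_eq {S : Set V} (hS : G.IsDecyclingSet S)
    (hmin : ∀ T, G.IsDecyclingSet T → S.ncard ≤ T.ncard) : G.decyclingNumber = S.ncard :=
  le_antisymm (Nat.sInf_le ⟨S, hS, rfl⟩)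
    (le_csInf ⟨_, S, hS, rfl⟩ fun _ ⟨T, hT, hk⟩ => hk ▸ hmin T hT)

end SimpleGraph

theorem Finset.sum_card_filter_add_mem {G ι : Type*} [AddGroup G] [Fintype G] [DecidableEq G]
    (F : Finset G) (D : Finset ι) (φ : ι → G) :
    ∑ i, #{d ∈ D | i + φ d ∈ F} = #D * #F := by
  have hshift (d : ι) : ∑ i : G, (if i + φ d ∈ F then 1 else 0) = #F := by
    rw [Fintype.sum_equiv (Equiv.addRight (φ d)) (fun i => if i + φ d ∈ F then 1 else 0)
      (fun j => if j ∈ F then 1 else 0) fun _ => rfl]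
    simp
  simp only [card_filter]
  rw [sum_comm, sum_congr rfl fun d _ => hshift d, sum_const, smul_eq_mul]

namespace ZMod

variable {n : ℕ} [NeZero n]

lemma val_add_eq_or (a b : ZMod n) :
    (a + b).val = a.val + b.val ∨ (a + b).val + n = a.val + b.val := by
  rcases lt_or_ge (a.val + b.val) n with h | h
  · exact .inl (val_add_of_lt h)
  · exact .inr (val_add_val_of_le h).symm

lemma ncard_setOf_val (p : ℕ → Prop) [DecidablePred p] :
    {v : ZMod n | p v.val}.ncard = #{k ∈ range n | p k} := by
  rw [← Set.ncard_image_of_injective _ (val_injective n), ← Set.ncard_coe_finset]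
  congr 1
  ext k
  simp only [Set.mem_image, Set.mem_ofPred_eq, coe_filter, mem_range]
  refine ⟨?_, fun ⟨hk, hp⟩ => ⟨k, by rwa [val_cast_of_lt hk], val_cast_of_lt hk⟩⟩
  rintro ⟨v, hv, rfl⟩
  exact ⟨v.val_lt, hv⟩

end ZMod

section cycleCube

variable {n : ℕ}

lemma cycleCube_adj_add_add (u : ZMod n) {a b : ℕ} (hab : a < b) (hba : b ≤ a + 3)
    (hbn : b < n) : (cycleCube n).Adj (u + a) (u + b) := by
  obtain ⟨k, rfl⟩ := Nat.exists_eq_add_of_lt hab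
  refine ⟨fun h => ?_, ?_⟩
  · have := congrArg ZMod.val (add_left_cancel h)
    rw [ZMod.val_cast_of_lt (by omega), ZMod.val_cast_of_lt hbn] at this
    omega
  · have hsub : u + ((a + k + 1 : ℕ) : ZMod n) - (u + a) = ((k + 1 : ℕ) : ZMod n) := by
      push_cast
      ring
    rw [hsub]
    obtain hk : k ≤ 2 := by omega
    interval_cases k <;> simp

lemma exists_val_add_eq_of_cycleCube_adj (hn : 4 ≤ n) {u v : ZMod n}
    (h : (cycleCube n).Adj u v) : ∃ c, 1 ≤ c ∧ c ≤ 3 ∧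
      (u.val + c = v.val ∨ v.val + c = u.val ∨ u.val + c = v.val + n ∨ v.val + c = u.val + n) := by
  have : NeZero n := ⟨by omega⟩
  obtain ⟨c, hc1, hc3, hc⟩ : ∃ c : ℕ, 1 ≤ c ∧ c ≤ 3 ∧ (u = v + c ∨ v = u + c) := by
    obtain ⟨-, h | h | h | h | h | h⟩ := h <;> rw [sub_eq_iff_eq_add'] at h
    exacts [⟨1, le_rfl, by norm_num, .inl (by simpa [add_comm] using h)⟩,
      ⟨1, le_rfl, by norm_num, .inr (by simpa [add_comm] using h)⟩,
      ⟨2, by norm_num, by norm_num, .inl (by simpa [add_comm] using h)⟩,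
      ⟨2, by norm_num, by norm_num, .inr (by simpa [add_comm] using h)⟩,
      ⟨3, by norm_num, le_rfl, .inl (by simpa [add_comm] using h)⟩,
      ⟨3, by norm_num, le_rfl, .inr (by simpa [add_comm] using h)⟩]
  have hcv : (c : ZMod n).val = c := ZMod.val_cast_of_lt (by omega)
  refine ⟨c, hc1, hc3, ?_⟩
  rcases hc with rfl | rfl
  · rcases ZMod.val_add_eq_or v c with h | h <;> omega
  · rcases ZMod.val_add_eq_or u c with h | h <;> omega

/-- Residues of nonzero even value that are adjacent in `Cₙ³` have values differing by exactly
`2`; the wrap-around edge from `n - 2` would need the removed vertex `0`. -/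
lemma isAcyclic_cycleCube_induce_even_val (hn : 4 ≤ n) (h2 : Even n) :
    ((cycleCube n).induce {v : ZMod n | v.val ≠ 0 ∧ 2 ∣ v.val}).IsAcyclic := by
  have : NeZero n := ⟨by omega⟩
  obtain ⟨m, hm⟩ := h2
  let f : (cycleCube n).induce {v : ZMod n | v.val ≠ 0 ∧ 2 ∣ v.val} →g hasse ℕ :=
    { toFun := fun v => v.1.val / 2
      map_rel' := fun {u v} huv => by
        obtain ⟨c, hc1, hc3, hc⟩ :=
          exists_val_add_eq_of_cycleCube_adj hn (show (cycleCube n).Adj u.1 v.1 from huv)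
        have hu : u.1.val ≠ 0 ∧ 2 ∣ u.1.val := u.2
        have hv : v.1.val ≠ 0 ∧ 2 ∣ v.1.val := v.2
        have hu' := u.1.val_lt
        have hv' := v.1.val_lt
        rw [hasse_adj, Nat.covBy_iff_add_one_eq, Nat.covBy_iff_add_one_eq]
        omega }
  refine (isAcyclic_hasse ℕ).comap f fun u v huv => Subtype.ext (ZMod.val_injective _ ?_)
  have hu : u.1.val ≠ 0 ∧ 2 ∣ u.1.val := u.2
  have hv : v.1.val ≠ 0 ∧ 2 ∣ v.1.val := v.2
  change u.1.val / 2 = v.1.val / 2 at huv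
  omega

lemma ncard_compl_setOf_even_val (hn : n ≠ 0) (h2 : Even n) :
    {v : ZMod n | v.val ≠ 0 ∧ 2 ∣ v.val}ᶜ.ncard = (n + 2) / 2 := by
  have : NeZero n := ⟨hn⟩
  have := Set.ncard_compl_add_ncard {v : ZMod n | v.val ≠ 0 ∧ 2 ∣ v.val}
  rw [ZMod.ncard_setOf_val (fun k => k ≠ 0 ∧ 2 ∣ k), Nat.card_zmod] at this
  obtain ⟨N, rfl⟩ : ∃ N, n = N + 1 := ⟨n - 1, by omega⟩
  rw [Nat.card_multiples'] at this
  obtain ⟨m, hm⟩ := h2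
  omega

def windowCount (F : Finset (ZMod n)) (i : ZMod n) : ℕ :=
  #{d ∈ range 4 | i + ((d : ℕ) : ZMod n) ∈ F}

variable {F : Finset (ZMod n)}

lemma windowCount_le_two (hn : 4 ≤ n)
    (hF : ((cycleCube n).induce (F : Set (ZMod n))).IsAcyclic) (i : ZMod n) :
    windowCount F i ≤ 2 := by
  have hinj : Set.InjOn (fun d : ℕ => i + d) (range 4 : Set ℕ) := by
    intro d hd d' hd' h
    simp only [coe_range, Set.mem_Iio] at hd hd'
    have := congrArg ZMod.val (add_left_cancel h)
    rwa [ZMod.val_cast_of_lt (by omega), ZMod.val_cast_of_lt (by omega)] at this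
  rw [windowCount, ← card_image_of_injOn (hinj.mono (coe_subset.2 (filter_subset _ _)))]
  refine hF.card_le_two_of_isClique ?_ ?_
  · simp only [coe_image, coe_filter, mem_range]
    rintro _ ⟨d, ⟨hd, -⟩, rfl⟩ _ ⟨d', ⟨hd', -⟩, rfl⟩ hne
    rcases lt_trichotomy d d' with h | rfl | h
    · exact cycleCube_adj_add_add i h (by omega) (by omega)
    · exact absurd rfl hne
    · exact (cycleCube_adj_add_add i h (by omega) (by omega)).symm
  · intro x hx
    simp only [coe_image, coe_filter, Set.mem_image, Set.mem_ofPred_eq] at hx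
    obtain ⟨d, ⟨-, hd⟩, rfl⟩ := hx
    exact hd

lemma add_four_mem_iff (hw : ∀ i, windowCount F i = 2) (i : ZMod n) : i + 4 ∈ F ↔ i ∈ F := by
  have h0 := hw i
  have h1 := hw (i + 1)
  simp only [windowCount, card_filter, sum_range_succ, sum_range_zero] at h0 h1
  norm_num [add_assoc] at h0 h1
  split_ifs at h0 h1 <;> simp_all

lemma exists_add_mem_of_windowCount_eq_two {v : ZMod n} (hw : windowCount F v = 2) :
    ∃ d : ℕ, 1 ≤ d ∧ d ≤ 3 ∧ v + d ∈ F := by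
  obtain ⟨d, hd, hd0⟩ := exists_mem_ne (s := {d ∈ range 4 | v + ((d : ℕ) : ZMod n) ∈ F})
    (by rw [← windowCount, hw]; omega) 0
  simp only [mem_filter, mem_range] at hd
  exact ⟨d, by omega, by omega, hd.2⟩

lemma not_isAcyclic_of_windowCount_eq_two (hn : 5 ≤ n) (hw : ∀ i, windowCount F i = 2)
    (hF : F.Nonempty) : ¬((cycleCube n).induce (F : Set (ZMod n))).IsAcyclic := by
  intro hacyc
  have : Nonempty (F : Set (ZMod n)) := hF.to_set.to_subtype
  obtain ⟨⟨v, hv⟩, hsub⟩ := hacyc.exists_neighborSet_subsingleton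
  obtain ⟨d, hd1, hd3, hvd⟩ := exists_add_mem_of_windowCount_eq_two (hw v)
  have hvd' : v - 4 + d ∈ F := by
    rwa [← add_four_mem_iff hw, show v - 4 + d + 4 = v + d by ring]
  have hadj₁ : (cycleCube n).Adj v (v + d) := by
    simpa using cycleCube_adj_add_add v (a := 0) (b := d) (by omega) (by omega) (by omega)
  have hadj₂ : (cycleCube n).Adj v (v - 4 + d) := by
    have := cycleCube_adj_add_add (v - 4) (a := d) (b := 4) (by omega) (by omega) hn
    rwa [Nat.cast_ofNat, sub_add_cancel, adj_comm] at this
  have heq := congrArg Subtype.val <| hsub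
    (show (⟨v + d, hvd⟩ : (F : Set (ZMod n))) ∈ _ from hadj₁)
    (show (⟨v - 4 + d, hvd'⟩ : (F : Set (ZMod n))) ∈ _ from hadj₂)
  have h4 : (4 : ZMod n) = 0 := by linear_combination heq
  simpa [h4] using ZMod.val_ofNat_of_lt (n := n) (a := 4) (by omega)

lemma two_mul_card_lt (hn : 6 ≤ n)
    (hF : ((cycleCube n).induce (F : Set (ZMod n))).IsAcyclic) : 2 * #F < n := by
  have : NeZero n := ⟨by omega⟩
  have hsum : ∑ i, windowCount F i = 4 * #F := by
    simpa [windowCount] using sum_card_filter_add_mem F (range 4) (Nat.cast : ℕ → ZMod n)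
  have hle := windowCount_le_two (by omega) hF
  have hbound : ∑ i, windowCount F i ≤ ∑ _i : ZMod n, 2 := sum_le_sum fun i _ => hle i
  rw [sum_const, card_univ, ZMod.card, smul_eq_mul] at hbound
  refine lt_of_le_of_ne (by omega) fun heq =>
    not_isAcyclic_of_windowCount_eq_two (by omega) (fun i => ?_) (card_pos.1 (by omega)) hF
  refine (sum_eq_sum_iff_of_le fun i _ => hle i).1 ?_ i (mem_univ i)
  rw [hsum, sum_const, card_univ, ZMod.card, smul_eq_mul]
  omega

lemma le_ncard_of_isDecyclingSet_cycleCube (hn : 6 ≤ n) (h2 : Even n) {S : Set (ZMod n)}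
    (hS : (cycleCube n).IsDecyclingSet S) : (n + 2) / 2 ≤ S.ncard := by
  have : NeZero n := ⟨by omega⟩
  classical
  have hlt := two_mul_card_lt hn (F := Sᶜ.toFinset) (by rwa [Set.coe_toFinset])
  have hcompl := Set.ncard_add_ncard_compl S
  rw [Nat.card_zmod, Set.ncard_eq_toFinset_card' Sᶜ] at hcompl
  obtain ⟨m, rfl⟩ := h2
  omega

end cycleCube

/-- For every even `n ≥ 6`, `∇(Cₙ³) = (n+2)/2`. -/
theorem decyclingNumber_cycleCube_even (n : ℕ) (hn : 6 ≤ n) (h2 : Even n) :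
    (cycleCube n).decyclingNumber = (n + 2) / 2 := by
  have hS : (cycleCube n).IsDecyclingSet {v : ZMod n | v.val ≠ 0 ∧ 2 ∣ v.val}ᶜ := by
    rw [IsDecyclingSet, compl_compl]
    exact isAcyclic_cycleCube_induce_even_val (by omega) h2
  have hcard := ncard_compl_setOf_even_val (by omega) h2
  rw [← hcard]
  exact decyclingNumber_eq hS fun T hT =>
    hcard ▸ le_ncard_of_isDecyclingSet_cycleCube hn h2 hT
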